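/- Suppose x^1,...,x^m are pairwise distinct points in R^n and y^1,...,y^m are chosen independently and uniformly at random from {0,1}^n with m ≥ (2+ε)n for some 0 < ε ≤ 1. Let X+ = {x^i : first bit of y^i = 1} and X- = {x^i : first bit of y^i = 0}. Then the probability that (X+, X-) is linearly separable is at most e^{-γ n}, where γ > 0 depends only on ε. -/
import Mathlib

set_option maxHeartbeats 1000000

def LinSep (n : ℕ) (P M : Finset (Fin n → ℝ)) : Prop :=
  ∃ (y : Fin n → ℝ) (c : ℝ),
    (∀ x ∈ P, ∑ j, x j * y j > c) ∧ (∀ x ∈ M, ∑ j, x j * y j < c)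

open Finset Real


lemma aux_central (n : ℕ) (hn : 1 ≤ n) : 4 * (2*n+1).choose (n+1) ≤ 3 * 4^n := by
  induction n with
  | zero => omega
  | succ k ih =>
    rcases Nat.lt_or_ge 1 (k+1) with h | h
    · have hk : 1 ≤ k := by omega
      have ihk := ih hk
      have h1 : (2*(k+1)+1).choose (k+1+1) = (2*k+2).choose (k+1) + (2*k+2).choose (k+2) := by
        have h2 : 2*(k+1)+1 = (2*k+2)+1 := by ring
        rw [h2, Nat.choose_succ_succ]
      have h3 : (2*k+2).choose (k+2) ≤ (2*k+2).choose (k+1) := by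
        have := Nat.choose_le_middle (k+2) (2*k+2)
        have h4 : (2*k+2)/2 = k+1 := by omega
        rwa [h4] at this
      have h5 : (2*k+2).choose (k+1) = 2 * (2*k+1).choose (k+1) := by
        have h6 : (2*k+1).choose k = (2*k+1).choose (k+1) := by
          have := Nat.choose_symm (n := 2*k+1) (k := k+1) (by omega)
          have h7 : 2*k+1 - (k+1) = k := by omega
          rw [h7] at this
          omega
        have h8 : (2*k+2).choose (k+1) = (2*k+1).choose k + (2*k+1).choose (k+1) :=
          Nat.choose_succ_succ (2*k+1) k
        omega
      calc 4 * (2*(k+1)+1).choose (k+1+1) ≤ 4 * (4 * (2*k+1).choose (k+1)) := by omega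
        _ ≤ 4 * (3 * 4^k) := by omega
        _ = 3 * 4^(k+1) := by ring
    · have hk0 : k = 0 := by omega
      subst hk0
      decide

lemma aux_sum_pascal (m d : ℕ) :
    ∑ k ∈ range (d+1), (m+1).choose k
      = ∑ k ∈ range (d+1), m.choose k + ∑ k ∈ range d, m.choose k := by
  induction d with
  | zero => simp
  | succ d ih =>
    rw [sum_range_succ, ih]
    have h1 : (m+1).choose (d+1) = m.choose d + m.choose (d+1) := Nat.choose_succ_succ m d
    rw [h1, sum_range_succ (f := fun k => m.choose k) (d+1),
      sum_range_succ (f := fun k => m.choose k) d]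
    ring

lemma aux_seven_eighth (n m : ℕ) (hn : 1 ≤ n) (hm : 2*n+1 ≤ m) :
    8 * ∑ k ∈ range (n+2), m.choose k ≤ 7 * 2^m := by
  induction m with
  | zero => omega
  | succ m ih =>
    rcases Nat.lt_or_ge m (2*n+1) with h | h
    · have hm' : m = 2*n := by omega
      subst hm'
      have hsum : ∑ k ∈ range (n+2), (2*n+1).choose k
          = 4^n + (2*n+1).choose (n+1) := by
        rw [show n+2 = (n+1)+1 by rfl, sum_range_succ, Nat.sum_range_choose_halfway]
      have hc := aux_central n hn
      have hp : 2^(2*n+1) = 2 * 4^n := by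
        rw [pow_succ', pow_mul]
        norm_num
      rw [show (2*n)+1 = 2*n+1 by rfl] at *
      rw [hsum, hp]
      omega
    · have ihm := ih h
      have h1 : ∑ k ∈ range (n+2), (m+1).choose k
          = ∑ k ∈ range (n+2), m.choose k + ∑ k ∈ range (n+1), m.choose k := by
        have := aux_sum_pascal m (n+1)
        convert this using 3 <;> omega
      have h2 : ∑ k ∈ range (n+1), m.choose k ≤ ∑ k ∈ range (n+2), m.choose k := by
        apply sum_le_sum_of_subset
        exact range_subset_range.2 (by omega)
      calc 8 * ∑ k ∈ range (n+2), (m+1).choose k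
          ≤ 2 * (8 * ∑ k ∈ range (n+2), m.choose k) := by omega
        _ ≤ 2 * (7 * 2^m) := by omega
        _ = 7 * 2^(m+1) := by ring


lemma aux_chernoff (l : ℝ) (hl0 : 0 < l) (hl1 : l ≤ 1) (n m : ℕ) (hnm : n + 1 ≤ m) :
    l^(n+1) * (∑ k ∈ range (n+2), (m.choose k : ℝ)) ≤ (1+l)^m := by
  have h1 : (l+1)^m = ∑ k ∈ range (m+1), l^k * 1^(m-k) * (m.choose k : ℝ) := add_pow l 1 m
  have h2 : l^(n+1) * (∑ k ∈ range (n+2), (m.choose k : ℝ))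
      = ∑ k ∈ range (n+2), l^(n+1) * (m.choose k : ℝ) := by rw [mul_sum]
  rw [h2, show (1:ℝ)+l = l+1 by ring, h1]
  have h3 : ∀ k ∈ range (n+2), l^(n+1) * (m.choose k : ℝ) ≤ l^k * 1^(m-k) * (m.choose k : ℝ) := by
    intro k hk
    rw [mem_range] at hk
    have : l^(n+1) ≤ l^k := pow_le_pow_of_le_one hl0.le hl1 (by omega)
    have hc : (0:ℝ) ≤ (m.choose k : ℝ) := Nat.cast_nonneg _
    rw [one_pow, mul_one]
    exact mul_le_mul_of_nonneg_right this hc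
  calc ∑ k ∈ range (n+2), l^(n+1) * (m.choose k : ℝ)
      ≤ ∑ k ∈ range (n+2), l^k * 1^(m-k) * (m.choose k : ℝ) := sum_le_sum h3
    _ ≤ ∑ k ∈ range (m+1), l^k * 1^(m-k) * (m.choose k : ℝ) := by
        apply sum_le_sum_of_subset_of_nonneg (range_subset_range.2 (by omega))
        intro k _ _
        positivity

noncomputable def myGamma (ε : ℝ) : ℝ := min (ε * Real.log (8/7) / 4) (3*ε^2/512)

lemma myGamma_pos (ε : ℝ) (hε0 : 0 < ε) : 0 < myGamma ε := by
  have h78 : (0:ℝ) < Real.log (8/7) := Real.log_pos (by norm_num)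
  apply lt_min <;> positivity

lemma aux_log_ineq (ε γ N M L1 L2 : ℝ) (hε0 : 0 < ε) (hε1 : ε ≤ 1)
    (hγ : γ ≤ 3*ε^2/512) (hN : 1 ≤ N) (hc : 4 ≤ ε*N) (hM : (2+ε)*N ≤ M)
    (hL1 : L1 ≤ -(ε/16)/2) (hL2 : -(ε/16)*(1+2*(ε/16)) ≤ L2) :
    M * L1 ≤ -γ*N + (N+1)*L2 := by
  have hN0 : (0:ℝ) < N := by linarith
  have hL1neg : L1 ≤ 0 := by nlinarith
  have s1 : M * L1 ≤ ((2+ε)*N) * L1 := mul_le_mul_of_nonpos_right hM hL1neg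
  have s2 : ((2+ε)*N) * L1 ≤ ((2+ε)*N) * (-(ε/16)/2) := by
    apply mul_le_mul_of_nonneg_left hL1 (by nlinarith)
  have s3 : (N+1) * (-(ε/16)*(1+2*(ε/16))) ≤ (N+1)*L2 := by
    apply mul_le_mul_of_nonneg_left hL2 (by linarith)
  have s4 : (N*(1+ε/4)) * (-(ε/16)*(1+2*(ε/16))) ≤ (N+1) * (-(ε/16)*(1+2*(ε/16))) := by
    have h1 : N+1 ≤ N*(1+ε/4) := by nlinarith
    have h2 : (-(ε/16)*(1+2*(ε/16))) ≤ 0 := by nlinarith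
    exact mul_le_mul_of_nonpos_right h1 h2
  have s5 : ((2+ε)*N) * (-(ε/16)/2) ≤ -γ*N + (N*(1+ε/4)) * (-(ε/16)*(1+2*(ε/16))) := by
    have key : γ*N ≤ ((2+ε)*(ε/32) - (1+ε/4)*(ε/16)*(1+ε/8)) * N := by
      have hcoef : 3*ε^2/512 ≤ (2+ε)*(ε/32) - (1+ε/4)*(ε/16)*(1+ε/8) := by nlinarith [sq_nonneg ε, mul_nonneg (mul_nonneg hε0.le hε0.le) hε0.le]
      have := mul_le_mul_of_nonneg_right hγ hN0.le
      nlinarith [mul_le_mul_of_nonneg_right hcoef hN0.le]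
    nlinarith
  linarith

lemma aux_numeric (ε : ℝ) (hε0 : 0 < ε) (hε1 : ε ≤ 1) (n m : ℕ) (hn : 1 ≤ n)
    (hm : (2+ε) * n ≤ (m:ℝ)) :
    (∑ k ∈ range (n+2), (m.choose k : ℝ)) ≤ Real.exp (-(myGamma ε) * n) * 2^m := by
  have hγ1 : myGamma ε ≤ ε * Real.log (8/7) / 4 := min_le_left _ _
  have hγ2 : myGamma ε ≤ 3*ε^2/512 := min_le_right _ _
  have hγ0 : 0 < myGamma ε := myGamma_pos ε hε0
  have hN1 : (1:ℝ) ≤ (n:ℝ) := by exact_mod_cast hn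
  have hmn : 2*n+1 ≤ m := by
    have h2 : (2*(n:ℝ)) < (m:ℝ) := by nlinarith
    exact_mod_cast Nat.succ_le_of_lt (by exact_mod_cast h2)
  have h2m : (0:ℝ) < 2^m := by positivity
  rcases le_or_gt (ε * n) 4 with hcase | hcase
  · have h78 := aux_seven_eighth n m hn hmn
    have h78' : (∑ k ∈ range (n+2), (m.choose k : ℝ)) ≤ (7/8) * 2^m := by
      have h8 : (8:ℝ) * ∑ k ∈ range (n+2), (m.choose k : ℝ) ≤ 7 * 2^m := by
        exact_mod_cast h78
      linarith
    have hexp : (7/8 : ℝ) ≤ Real.exp (-(myGamma ε) * n) := by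
      have hl : 0 < Real.log (8/7) := Real.log_pos (by norm_num)
      have hlog : myGamma ε * n ≤ Real.log (8/7) := by
        calc myGamma ε * n ≤ (ε * Real.log (8/7) / 4) * n :=
              mul_le_mul_of_nonneg_right hγ1 (by linarith)
          _ = Real.log (8/7) * (ε * n / 4) := by ring
          _ ≤ Real.log (8/7) * 1 := mul_le_mul_of_nonneg_left (by linarith) hl.le
          _ = Real.log (8/7) := by ring
      have hee : Real.exp (-Real.log (8/7)) ≤ Real.exp (-(myGamma ε) * n) := by
        apply Real.exp_le_exp.2; linarith
      have heq : Real.exp (-Real.log (8/7)) = 7/8 := by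
        rw [Real.exp_neg, Real.exp_log (by norm_num)]
        norm_num
      linarith [heq ▸ hee]
    nlinarith
  · have ht0 : (0:ℝ) < ε/16 := by positivity
    have ht1 : ε/16 ≤ 1/16 := by linarith
    have hl0 : (0:ℝ) < 1 - ε/16 := by linarith
    have hl1 : (1:ℝ) - ε/16 ≤ 1 := by linarith
    have hcher := aux_chernoff (1 - ε/16) hl0 hl1 n m (by omega)
    have hlpow : (0:ℝ) < (1 - ε/16)^(n+1) := by positivity
    have key : (1+(1 - ε/16))^m ≤ Real.exp (-(myGamma ε) * n) * 2^m * (1 - ε/16)^(n+1) := by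
      have h1l : (0:ℝ) < 1 + (1 - ε/16) := by linarith
      have hLHS : (0:ℝ) < (1+(1 - ε/16))^m := by positivity
      have hRHS : (0:ℝ) < Real.exp (-(myGamma ε) * n) * 2^m * (1 - ε/16)^(n+1) := by positivity
      rw [← Real.log_le_log_iff hLHS hRHS, Real.log_pow,
        Real.log_mul (by positivity) (by positivity),
        Real.log_mul (by positivity) (by positivity),
        Real.log_exp, Real.log_pow, Real.log_pow]
      have hsplit : Real.log (1+(1 - ε/16)) = Real.log 2 + Real.log (1 - (ε/16)/2) := by
        rw [← Real.log_mul (by norm_num) (by linarith)]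
        congr 1
        ring
      have hA1 : Real.log (1 - (ε/16)/2) ≤ -(ε/16)/2 := by
        have := Real.log_le_sub_one_of_pos (x := 1 - (ε/16)/2) (by linarith)
        linarith
      have hA2 : -(ε/16)*(1+2*(ε/16)) ≤ Real.log (1 - ε/16) := by
        have h := Real.one_sub_inv_le_log_of_pos hl0
        have hinv : (1 - ε/16)⁻¹ ≤ 1 + (ε/16) + 2*(ε/16)^2 := by
          rw [inv_le_iff_one_le_mul₀ hl0]
          nlinarith [mul_nonneg (sq_nonneg (ε/16)) (by linarith : (0:ℝ) ≤ 1 - 2*(ε/16))]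
        have e1 : -(ε/16)*(1+2*(ε/16)) = -(1 + (ε/16) + 2*(ε/16)^2) + 1 := by ring
        linarith
      have main := aux_log_ineq ε (myGamma ε) n m (Real.log (1 - (ε/16)/2))
        (Real.log (1 - ε/16)) hε0 hε1 hγ2 hN1 (by linarith) hm hA1 hA2
      rw [hsplit]
      push_cast
      nlinarith [main]
    have key' : (1 - ε/16)^(n+1) * (Real.exp (-(myGamma ε) * n) * 2^m)
        = Real.exp (-(myGamma ε) * n) * 2^m * (1 - ε/16)^(n+1) := by ring
    have h3 : (1 - ε/16)^(n+1) * (∑ k ∈ range (n+2), (m.choose k : ℝ))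
        ≤ (1 - ε/16)^(n+1) * (Real.exp (-(myGamma ε) * n) * 2^m) := by
      rw [key']
      exact hcher.trans key
    exact le_of_mul_le_mul_left h3 hlpow

def myEquiv (m n : ℕ) (i0 : Fin n) :
    (Fin m → Fin n → Bool) ≃ (Fin m → Bool) × (Fin m → {j : Fin n // j ≠ i0} → Bool) :=
  (Equiv.piCongrRight (fun _ : Fin m => Equiv.funSplitAt i0 Bool)).trans
    (Equiv.arrowProdEquivProdArrow _ _ _)

lemma myEquiv_fst (m n : ℕ) (i0 : Fin n) (y : Fin m → Fin n → Bool) :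
    ((myEquiv m n i0) y).1 = fun i => y i i0 := rfl

open scoped Classical in
lemma aux_count {m n : ℕ} (i0 : Fin n) (Q : (Fin m → Bool) → Prop) :
    (Finset.univ.filter (fun y : Fin m → Fin n → Bool => Q (fun i => y i i0))).card
        * 2^m
      = (Finset.univ.filter Q).card * Fintype.card (Fin m → Fin n → Bool) := by
  have c1 : (Finset.univ.filter (fun y : Fin m → Fin n → Bool => Q (fun i => y i i0))).card
      = Fintype.card {y : Fin m → Fin n → Bool // Q (fun i => y i i0)} :=
    (Fintype.card_subtype _).symm
  have e2 : {y : Fin m → Fin n → Bool // Q (fun i => y i i0)}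
      ≃ {p : (Fin m → Bool) × (Fin m → {j : Fin n // j ≠ i0} → Bool) // Q p.1} :=
    (myEquiv m n i0).subtypeEquiv (fun y => by rw [myEquiv_fst])
  have e3 : {p : (Fin m → Bool) × (Fin m → {j : Fin n // j ≠ i0} → Bool) // Q p.1}
      ≃ {b : Fin m → Bool // Q b} × (Fin m → {j : Fin n // j ≠ i0} → Bool) :=
    Equiv.prodSubtypeFstEquivSubtypeProd
  have c2 : Fintype.card {y : Fin m → Fin n → Bool // Q (fun i => y i i0)}
      = (Finset.univ.filter Q).card * Fintype.card (Fin m → {j : Fin n // j ≠ i0} → Bool) := by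
    rw [Fintype.card_congr (e2.trans e3), Fintype.card_prod, Fintype.card_subtype]
  have c3 : Fintype.card (Fin m → Fin n → Bool)
      = 2^m * Fintype.card (Fin m → {j : Fin n // j ≠ i0} → Bool) := by
    rw [Fintype.card_congr (myEquiv m n i0), Fintype.card_prod]
    congr 1
    simp [Fintype.card_fun]
  rw [c1, c2, c3]
  ring


open scoped Classical in
lemma aux_vc (n m : ℕ) (x : Fin m → Fin n → ℝ) (hx : Function.Injective x) :
    (Finset.univ.filter (fun b : Fin m → Bool =>
        LinSep n ((Finset.univ.filter (fun i => b i = true)).image x)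
          ((Finset.univ.filter (fun i => b i = false)).image x))).card
      ≤ ∑ k ∈ range (n+2), m.choose k := by
  set A := Finset.univ.filter (fun b : Fin m → Bool =>
        LinSep n ((Finset.univ.filter (fun i => b i = true)).image x)
          ((Finset.univ.filter (fun i => b i = false)).image x)) with hA
  set 𝒜 : Finset (Finset (Fin m)) := A.image (fun b => univ.filter (fun i => b i = true))
    with h𝒜
  have hginj : Function.Injective (fun b : Fin m → Bool => univ.filter (fun i => b i = true)) := by
    intro b₁ b₂ h
    funext i
    dsimp only at h
    have h1 : i ∈ univ.filter (fun i => b₁ i = true) ↔ i ∈ univ.filter (fun i => b₂ i = true) := by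
      rw [h]
    simp only [mem_filter, mem_univ, true_and] at h1
    cases hb1 : b₁ i <;> cases hb2 : b₂ i <;> simp_all
  have hcard : A.card = 𝒜.card := (Finset.card_image_of_injective A hginj).symm
  -- key: shattered sets have size ≤ n+1
  have hshat : ∀ s : Finset (Fin m), 𝒜.Shatters s → s.card ≤ n + 1 := by
    intro s hs
    by_contra hcon
    push_neg at hcon
    have hcard_s : n + 2 ≤ s.card := hcon
    set f : {i // i ∈ s} → (Fin n → ℝ) := fun i => x i.1 with hf
    have hdep : ¬ AffineIndependent ℝ f := by
      intro hind
      have hc := hind.card_le_finrank_succ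
      have hr : Module.finrank ℝ (vectorSpan ℝ (Set.range f)) ≤ n := by
        have h1 := Submodule.finrank_le (vectorSpan ℝ (Set.range f))
        rwa [Module.finrank_fintype_fun_eq_card, Fintype.card_fin] at h1
      rw [Fintype.card_coe] at hc
      omega
    obtain ⟨I, p, hp⟩ := Convex.radon_partition hdep
    have hdec : DecidablePred (fun i : Fin m => ∀ h : i ∈ s, (⟨i, h⟩ : {i // i ∈ s}) ∈ I) :=
      fun i => Classical.propDecidable _
    set U : Finset (Fin m) :=
      @Finset.filter _ (fun i : Fin m => ∀ h : i ∈ s, (⟨i, h⟩ : {i // i ∈ s}) ∈ I) hdec s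
      with hU
    obtain ⟨t, ht𝒜, hst⟩ := hs (show U ⊆ s from Finset.filter_subset _ _)
    obtain ⟨b, hbA, hbt⟩ := Finset.mem_image.1 ht𝒜
    have hbP := (Finset.mem_filter.1 hbA).2
    obtain ⟨y, c, hPos, hNeg⟩ := hbP
    have hlin : IsLinearMap ℝ (fun z : Fin n → ℝ => ∑ j, z j * y j) := by
      constructor
      · intro a b'
        simp [add_mul, Finset.sum_add_distrib]
      · intro r a
        simp only [Pi.smul_apply, smul_eq_mul, Finset.mul_sum, mul_assoc]
    have hsub1 : f '' I ⊆ {z : Fin n → ℝ | c < ∑ j, z j * y j} := by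
      rintro _ ⟨i0, hi0I, rfl⟩
      have hiU : (i0 : Fin m) ∈ U := by
        rw [hU, mem_filter]
        refine ⟨i0.2, fun h => ?_⟩
        have : (⟨(i0 : Fin m), h⟩ : {i // i ∈ s}) = i0 := Subtype.ext rfl
        rw [this]
        exact hi0I
      have hit : (i0 : Fin m) ∈ t := by
        have hm2 : (i0 : Fin m) ∈ s ∩ t := by rw [hst]; exact hiU
        exact (Finset.mem_inter.1 hm2).2
      have hbi : b (i0 : Fin m) = true := by
        rw [← hbt] at hit
        simpa using hit
      have hx_mem : x (i0 : Fin m) ∈ (univ.filter (fun i => b i = true)).image x :=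
        mem_image_of_mem x (mem_filter.2 ⟨mem_univ _, hbi⟩)
      exact hPos _ hx_mem
    have hsub2 : f '' Iᶜ ⊆ {z : Fin n → ℝ | (∑ j, z j * y j) < c} := by
      rintro _ ⟨i0, hi0I, rfl⟩
      have hiU : (i0 : Fin m) ∉ U := by
        rw [hU, mem_filter]
        rintro ⟨-, hall⟩
        have := hall i0.2
        have heq : (⟨(i0 : Fin m), i0.2⟩ : {i // i ∈ s}) = i0 := Subtype.ext rfl
        rw [heq] at this
        exact hi0I this
      have hit : (i0 : Fin m) ∉ t := by
        intro hit
        apply hiU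
        rw [← hst]
        exact Finset.mem_inter.2 ⟨i0.2, hit⟩
      have hbi : b (i0 : Fin m) = false := by
        have : ¬ (b (i0 : Fin m) = true) := by
          intro hbi
          apply hit
          rw [← hbt]
          exact mem_filter.2 ⟨mem_univ _, hbi⟩
        cases hb : b (i0 : Fin m)
        · rfl
        · exact absurd hb this
      have hx_mem : x (i0 : Fin m) ∈ (univ.filter (fun i => b i = false)).image x :=
        mem_image_of_mem x (mem_filter.2 ⟨mem_univ _, hbi⟩)
      exact hNeg _ hx_mem
    have hc1 : p ∈ {z : Fin n → ℝ | c < ∑ j, z j * y j} :=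
      convexHull_min hsub1 (convex_halfSpace_gt hlin c) hp.1
    have hc2 : p ∈ {z : Fin n → ℝ | (∑ j, z j * y j) < c} :=
      convexHull_min hsub2 (convex_halfSpace_lt hlin c) hp.2
    simp only [Set.mem_setOf_eq] at hc1 hc2
    linarith
  have hvc : 𝒜.vcDim ≤ n + 1 := by
    apply Finset.sup_le
    intro s hs
    exact hshat s (Finset.mem_shatterer.1 hs)
  calc A.card = 𝒜.card := hcard
    _ ≤ 𝒜.shatterer.card := Finset.card_le_card_shatterer 𝒜
    _ ≤ ∑ k ∈ Finset.Iic 𝒜.vcDim, (Fintype.card (Fin m)).choose k :=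
        Finset.card_shatterer_le_sum_vcDim
    _ ≤ ∑ k ∈ range (n+2), m.choose k := by
        rw [Fintype.card_fin]
        have hIic : Finset.Iic (n+1) = range (n+2) := by
          ext k
          simp [Nat.lt_succ_iff]
        rw [← hIic]
        apply Finset.sum_le_sum_of_subset
        intro k hk
        simp only [Finset.mem_Iic] at *
        omega

-- With x¹,...,xᵐ pairwise distinct points of ℝⁿ and y¹,...,yᵐ i.i.d. uniform
-- on {0,1}ⁿ, m ≥ (2+ε)n, the probability (uniform counting over all tuples y)
-- that the dichotomy of {x¹,...,xᵐ} induced by the first bits of the yⁱ is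
-- linearly separable is at most e^{-γn}, γ > 0 depending only on ε.
open scoped Classical in
theorem stmt13 (ε : ℝ) (hε0 : 0 < ε) (hε1 : ε ≤ 1) :
    ∃ γ : ℝ, 0 < γ ∧
      ∀ (n m : ℕ) (hn : 0 < n) (x : Fin m → (Fin n → ℝ)),
        Function.Injective x → (2 + ε) * n ≤ (m : ℝ) →
        ((Finset.univ.filter (fun y : Fin m → Fin n → Bool =>
            LinSep n
              ((Finset.univ.filter (fun i => y i ⟨0, hn⟩ = true)).image x)
              ((Finset.univ.filter (fun i => y i ⟨0, hn⟩ = false)).image x))).card : ℝ)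
          ≤ Real.exp (-γ * n) * (Fintype.card (Fin m → Fin n → Bool) : ℝ) := by
  refine ⟨myGamma ε, myGamma_pos ε hε0, ?_⟩
  intro n m hn x hxinj hm
  have hcount := aux_count (m := m) (n := n) ⟨0, hn⟩
    (fun b : Fin m → Bool => LinSep n
      ((Finset.univ.filter (fun i => b i = true)).image x)
      ((Finset.univ.filter (fun i => b i = false)).image x))
  have hvc := aux_vc n m x hxinj
  have hnum := aux_numeric ε hε0 hε1 n m hn hm
  have h2m : (0:ℝ) < 2^m := by positivity
  have hT0 : (0:ℝ) ≤ (Fintype.card (Fin m → Fin n → Bool) : ℝ) := Nat.cast_nonneg _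
  have h1 : ((Finset.univ.filter (fun y : Fin m → Fin n → Bool =>
            LinSep n
              ((Finset.univ.filter (fun i => y i ⟨0, hn⟩ = true)).image x)
              ((Finset.univ.filter (fun i => y i ⟨0, hn⟩ = false)).image x))).card : ℝ) * 2^m
      = ((Finset.univ.filter (fun b : Fin m → Bool => LinSep n
          ((Finset.univ.filter (fun i => b i = true)).image x)
          ((Finset.univ.filter (fun i => b i = false)).image x))).card : ℝ)
        * (Fintype.card (Fin m → Fin n → Bool) : ℝ) := by
    exact_mod_cast congrArg (Nat.cast (R := ℝ)) hcount
  have h2 : ((Finset.univ.filter (fun b : Fin m → Bool => LinSep n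
          ((Finset.univ.filter (fun i => b i = true)).image x)
          ((Finset.univ.filter (fun i => b i = false)).image x))).card : ℝ)
      ≤ Real.exp (-(myGamma ε) * n) * 2^m := by
    calc ((Finset.univ.filter (fun b : Fin m → Bool => LinSep n
          ((Finset.univ.filter (fun i => b i = true)).image x)
          ((Finset.univ.filter (fun i => b i = false)).image x))).card : ℝ)
        ≤ ((∑ k ∈ range (n+2), m.choose k : ℕ) : ℝ) := by exact_mod_cast hvc
      _ = (∑ k ∈ range (n+2), (m.choose k : ℝ)) := by push_cast; rfl
      _ ≤ Real.exp (-(myGamma ε) * n) * 2^m := hnum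
  have h3 := mul_le_mul_of_nonneg_right h2 hT0
  rw [← h1] at h3
  have h4 : Real.exp (-(myGamma ε) * n) * 2 ^ m * (Fintype.card (Fin m → Fin n → Bool) : ℝ)
      = (Real.exp (-(myGamma ε) * n) * (Fintype.card (Fin m → Fin n → Bool) : ℝ)) * 2^m := by
    ring
  rw [h4] at h3
  exact le_of_mul_le_mul_right h3 h2m
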